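/- arXiv:1103.2202 — 2 statements merged into one kernel-verified Lean document; each statement's English description precedes it below -/
import Mathlib

section
/- If G possesses a homogeneous cycle C = (e_1,...,e_l) with vertices i_1,...,i_l such that μ_C(i_a) - μ_C(i_b) ≤ dist_G(i_a, i_b) for all 1 ≤ a,b ≤ l, then the polytope P_G is not simplicial: it has a face containing the l affinely dependent points ρ(e_1),...,ρ(e_l). -/
open Finset

/-- `ρ(e) = e_{i} - e_{j}` for an arrow `e = (i,j)`. -/
def rho {V : Type*} [DecidableEq V] (e : V × V) : V → ℝ :=
  fun k => (if k = e.1 then (1 : ℝ) else 0) - (if k = e.2 then (1 : ℝ) else 0)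

/-- The polytope `P_G` associated with the arrow set `A` of a directed graph. -/
def polyG {V : Type*} [DecidableEq V] (A : Finset (V × V)) : Set (V → ℝ) :=
  convexHull ℝ (rho '' (A : Set (V × V)))

/-- Connectivity of the underlying undirected graph of the directed graph with arrow set `A`. -/
def GConnected {V : Type*} [DecidableEq V] (A : Finset (V × V)) : Prop :=
  (SimpleGraph.fromRel (fun i j => (i, j) ∈ A)).Connected

/-- Cyclic successor on `Fin l`. -/
def succAt {l : ℕ} (h : 0 < l) (j : Fin l) : Fin l :=
  ⟨((j : ℕ) + 1) % l, Nat.mod_lt _ h⟩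

/-- The data of a cycle in a directed graph on the vertex set `V`:
a list of at least two distinct vertices, cyclically ordered, together with, for each
edge of the cycle, a choice of direction (`ε j = true` means the arrow points forwards). -/
structure PreCycle (V : Type*) where
  l : ℕ
  two_le : 2 ≤ l
  v : Fin l → V
  ε : Fin l → Bool
  inj : Function.Injective v

namespace PreCycle

variable {V : Type*}

theorem pos (C : PreCycle V) : 0 < C.l :=
  lt_of_lt_of_le Nat.zero_lt_two C.two_le

/-- The cyclically next index. -/
def nxt (C : PreCycle V) (j : Fin C.l) : Fin C.l := succAt C.pos j

/-- The arrow of the cycle corresponding to its `j`-th edge. -/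
def arrow (C : PreCycle V) (j : Fin C.l) : V × V :=
  if C.ε j then (C.v j, C.v (C.nxt j)) else (C.v (C.nxt j), C.v j)

/-- `C` is a cycle in the directed graph with arrow set `A`. -/
def IsCycleIn [DecidableEq V] (C : PreCycle V) (A : Finset (V × V)) : Prop :=
  (∀ j, C.arrow j ∈ A) ∧ Function.Injective C.arrow

/-- A cycle is homogeneous if it has as many forward arrows as backward arrows. -/
def Homogeneous (C : PreCycle V) : Prop :=
  2 * (Finset.univ.filter fun j => C.ε j = true).card = C.l

/-- A directed cycle: all arrows point in the direction of traversal. -/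
def IsDirected (C : PreCycle V) : Prop := ∀ j, C.ε j = true

/-- The defining property of the function `μ_C` attached to a homogeneous cycle `C`
(here recorded as a function of the position along the cycle; since the vertices of the
cycle are distinct this is the same as a function on the cycle vertices):
it is nonnegative, decreases by `1` along forward arrows, increases by `1` along
backward arrows, and has minimum value `0`. -/
def IsMu (C : PreCycle V) (μ : Fin C.l → ℤ) : Prop :=
  (∀ j, 0 ≤ μ j) ∧ (∀ j, μ (C.nxt j) = if C.ε j then μ j - 1 else μ j + 1) ∧ (∃ j, μ j = 0)

end PreCycle

/-- Every arrow of the directed graph with arrow set `A` lies in a directed cycle. -/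
def EveryArrowInDirCycle {V : Type*} [DecidableEq V] (A : Finset (V × V)) : Prop :=
  ∀ e ∈ A, ∃ C : PreCycle V, C.IsCycleIn A ∧ C.IsDirected ∧ ∃ j, C.arrow j = e

/-- The dimension of a subset of `ℝ^V` (the dimension of its affine hull). -/
noncomputable def pdim {V : Type*} (s : Set (V → ℝ)) : ℕ :=
  Module.finrank ℝ (vectorSpan ℝ s)

/-- `F` is a facet of the polytope `P`: a nonempty exposed face of codimension one. -/
def IsFacetOf {V : Type*} (F P : Set (V → ℝ)) : Prop :=
  IsExposed ℝ P F ∧ F.Nonempty ∧ pdim F + 1 = pdim P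

/-- A polytope is simplicial if the vertices of every facet are affinely independent. -/
def Simplicial {V : Type*} (P : Set (V → ℝ)) : Prop :=
  ∀ F : Set (V → ℝ), IsFacetOf F P →
    AffineIndependent ℝ (fun x : (F.extremePoints ℝ) => (x : V → ℝ))

/-- The lattice `ℤ^V ∩ {x : Σ x_i = 0}`, as a subset of `ℝ^V`. -/
def latticeSet (V : Type*) [Fintype V] : Set (V → ℝ) :=
  {x | (∀ i, ∃ z : ℤ, x i = (z : ℝ)) ∧ ∑ i, x i = 0}

/-- The set of integer points of `ℝ^V`. -/
def intLat (V : Type*) : Set (V → ℝ) :=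
  {x | ∀ i, ∃ z : ℤ, x i = (z : ℝ)}

/-- `W` is a `ℤ`-basis of (the additive group generated by) `L`. -/
def IsZBasisOf {V : Type*} (W L : Set (V → ℝ)) : Prop :=
  W ⊆ L ∧ LinearIndependent ℤ (fun x : W => (x : V → ℝ)) ∧
    L ⊆ (Submodule.span ℤ W : Set (V → ℝ))

/-- There is a directed path of length `n` from `i` to `j` in the directed graph `A`. -/
def HasDPath {V : Type*} (A : Finset (V × V)) (i j : V) (n : ℕ) : Prop :=
  ∃ f : Fin (n + 1) → V, f 0 = i ∧ f (Fin.last n) = j ∧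
    ∀ k : Fin n, (f k.castSucc, f k.succ) ∈ A

/-- The underlying undirected graph of `A` contains an even cycle. -/
def HasEvenCycle {V : Type*} [DecidableEq V] (A : Finset (V × V)) : Prop :=
  ∃ C : PreCycle V, 3 ≤ C.l ∧ Even C.l ∧
    ∀ j, (C.v j, C.v (C.nxt j)) ∈ A ∨ (C.v (C.nxt j), C.v j) ∈ A

/-!
The signed sum `∑ ±ρ(e_j)` telescopes to `0`, and homogeneity makes the signs sum to `0`, so the
`ρ(e_j)` are affinely dependent. The hypothesis on `μ_C` is what is needed to extend `μ_C` to an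
integer potential `w` on all vertices with `w i - w j ≤ 1` on every arrow and equality on the
arrows of `C`; the functional `⟨w, ·⟩` is then `≤ 1` on `P_G` and exposes a face containing every
`ρ(e_j)`. Lifting `w` on a component of the graph of tight arrows until a new arrow becomes tight,
we may assume that the tight arrows form a connected spanning subgraph, and then this face is a
facet. Each `ρ(e)` is a vertex of `P_G`, hence of the facet, so the vertices of the facet are
affinely dependent.
-/

lemma mem_exposedPoints_convexHull_of_lt {E : Type*} [AddCommGroup E] [Module ℝ E]
    [TopologicalSpace E] {s : Set E} {x : E} (hx : x ∈ s) (l : StrongDual ℝ E)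
    (hl : ∀ y ∈ s, y ≠ x → l y < l x) : x ∈ (convexHull ℝ s).exposedPoints ℝ := by
  have hconv : Convex ℝ (insert x {y | l y < l x}) := by
    refine convex_iff_forall_pos.2 ?_
    rintro y hy z hz a b ha hb hab
    rcases hy with rfl | hy <;> rcases hz with rfl | hz
    · exact .inl (Convex.combo_self hab _)
    all_goals right; simp only [Set.mem_ofPred_eq, map_add, map_smul, smul_eq_mul] at *
    · linear_combination mul_lt_mul_of_pos_left hz hb + l y * hab
    · linear_combination mul_lt_mul_of_pos_left hy ha + l z * hab
    · linear_combination mul_lt_mul_of_pos_left hy ha + mul_lt_mul_of_pos_left hz hb + l x * hab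
  have hsub : convexHull ℝ s ⊆ insert x {y | l y < l x} :=
    convexHull_min (fun y hy => (eq_or_ne y x).imp id (hl y hy)) hconv
  refine ⟨subset_convexHull ℝ s hx, l, fun y hy => ?_⟩
  rcases hsub hy with rfl | hy'
  · exact ⟨le_rfl, fun _ => rfl⟩
  · exact ⟨hy'.le, fun h => absurd h (not_le.2 hy')⟩

lemma vectorSpan_le_ker_of_forall_eq {k E M : Type*} [Ring k] [AddCommGroup E] [Module k E]
    [AddCommGroup M] [Module k M] {s : Set E} (l : E →ₗ[k] M)
    {c : M} (h : ∀ x ∈ s, l x = c) : vectorSpan k s ≤ LinearMap.ker l := by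
  rw [vectorSpan_def, Submodule.span_le]
  rintro _ ⟨x, hx, y, hy, rfl⟩
  simp [h x hx, h y hy]

lemma IsFacetOf.ne {V : Type*} {F P : Set (V → ℝ)} (hF : IsFacetOf F P) : F ≠ P := by
  rintro rfl; exact Nat.succ_ne_self _ hF.2.2

section Rho

variable {V : Type*} [DecidableEq V]

lemma rho_swap (i j : V) : rho (j, i) = -rho (i, j) := by
  funext k; simp [rho]

lemma rho_self (i : V) : rho (i, i) = 0 := by
  funext k; simp [rho]

lemma rho_add_rho (i j k : V) : rho (i, j) + rho (j, k) = rho (i, k) := by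
  funext x; simp only [rho, Pi.add_apply]; ring

lemma rho_apply_le_one (e : V × V) (k : V) : rho e k ≤ 1 := by
  simp only [rho]; split_ifs <;> norm_num

lemma neg_one_le_rho_apply (e : V × V) (k : V) : -1 ≤ rho e k := by
  simp only [rho]; split_ifs <;> norm_num

lemma rho_apply_eq_one {e : V × V} {k : V} : rho e k = 1 ↔ k = e.1 ∧ k ≠ e.2 := by
  simp only [rho]; split_ifs <;> norm_num <;> simp_all

lemma rho_apply_eq_neg_one {e : V × V} {k : V} : rho e k = -1 ↔ k = e.2 ∧ k ≠ e.1 := by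
  simp only [rho]; split_ifs <;> norm_num <;> simp_all

lemma rho_injective_of_ne {e e' : V × V} (he : e.1 ≠ e.2) (h : rho e = rho e') : e = e' := by
  have h1 : rho e' e.1 = 1 := h ▸ rho_apply_eq_one.2 ⟨rfl, he⟩
  have h2 : rho e' e.2 = -1 := h ▸ rho_apply_eq_neg_one.2 ⟨rfl, he.symm⟩
  exact Prod.ext (rho_apply_eq_one.1 h1).1 (rho_apply_eq_neg_one.1 h2).1

lemma rho_mem_of_gConnected {V : Type*} [DecidableEq V] {B : Finset (V × V)} (hB : GConnected B)
    {U : Submodule ℝ (V → ℝ)} (hU : ∀ e ∈ B, rho e ∈ U) (i j : V) : rho (i, j) ∈ U := by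
  obtain ⟨p⟩ := hB.preconnected i j
  induction p with
  | nil => rw [rho_self]; exact U.zero_mem
  | @cons a b c hadj _ ih =>
    rw [← rho_add_rho a b c]
    refine U.add_mem ?_ ih
    rcases ((SimpleGraph.fromRel_adj _ _ _).1 hadj).2 with hab | hba
    · exact hU _ hab
    · rw [← neg_neg (rho (a, b)), ← rho_swap]; exact U.neg_mem (hU _ hba)

end Rho

namespace PreCycle

variable {V : Type*} (C : PreCycle V)

instance : NeZero C.l := ⟨C.pos.ne'⟩

lemma nxt_eq_add_one (j : Fin C.l) : C.nxt j = j + 1 := by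
  ext; simp [nxt, succAt, Fin.val_add]

lemma nxt_bijective : Function.Bijective C.nxt := by
  rw [show C.nxt = (· + 1) from funext C.nxt_eq_add_one]
  exact (Equiv.addRight 1).bijective

lemma nxt_ne (j : Fin C.l) : C.nxt j ≠ j := by
  rw [C.nxt_eq_add_one, Ne, add_eq_left, Fin.ext_iff, Fin.val_one', Fin.val_zero,
    Nat.mod_eq_of_lt C.two_le]
  exact one_ne_zero

lemma sum_rho_around [DecidableEq V] : ∑ j, rho (C.v j, C.v (C.nxt j)) = 0 := by
  funext k
  simp only [Finset.sum_apply, rho, Finset.sum_sub_distrib, Pi.zero_apply]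
  rw [C.nxt_bijective.sum_comp (fun j => if k = C.v j then (1 : ℝ) else 0), sub_self]

lemma arrow_of_isDirected (hC : C.IsDirected) (j : Fin C.l) :
    C.arrow j = (C.v j, C.v (C.nxt j)) := by
  simp [arrow, hC j]

def sign (j : Fin C.l) : ℝ := if C.ε j then 1 else -1

lemma sign_smul_rho_arrow [DecidableEq V] (j : Fin C.l) :
    C.sign j • rho (C.arrow j) = rho (C.v j, C.v (C.nxt j)) := by
  by_cases hj : C.ε j
  · simp [sign, arrow, hj]
  · simp only [sign, arrow, hj, Bool.false_eq_true, if_false, neg_one_smul, rho_swap (C.v j),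
      neg_neg]

lemma sum_sign_eq_zero (hC : C.Homogeneous) : ∑ j, C.sign j = 0 := by
  have hcard := Finset.card_filter_add_card_filter_not (s := Finset.univ) (fun j => C.ε j = true)
  rw [Finset.card_univ, Fintype.card_fin] at hcard
  unfold Homogeneous at hC
  simp only [sign, Finset.sum_ite, Finset.sum_const, nsmul_eq_mul, mul_one, mul_neg_one]
  have : (Finset.univ.filter fun j => ¬C.ε j = true).card =
      (Finset.univ.filter fun j => C.ε j = true).card := by omega
  rw [this, add_neg_cancel]

theorem not_affineIndependent_rho_arrow [DecidableEq V] (hC : C.Homogeneous) :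
    ¬ AffineIndependent ℝ (fun j => rho (C.arrow j)) := by
  intro hAI
  have hsum : ∑ j, C.sign j • rho (C.arrow j) = 0 := by
    simp only [sign_smul_rho_arrow, sum_rho_around]
  have h0 := hAI.eq_zero_of_sum_eq_zero (C.sum_sign_eq_zero hC) hsum ⟨0, C.pos⟩ (mem_univ _)
  unfold sign at h0
  split_ifs at h0 <;> norm_num at h0

variable {C} in
lemma IsMu.sub_arrow {μ : Fin C.l → ℤ} (hμ : C.IsMu μ) {w : V → ℤ}
    (hw : ∀ a, w (C.v a) = μ a) (j : Fin C.l) : w (C.arrow j).1 - w (C.arrow j).2 = 1 := by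
  have := hμ.2.1 j
  by_cases hj : C.ε j <;>
    simp only [arrow, hj, hw, if_true, Bool.false_eq_true, if_false] at this ⊢ <;> omega

end PreCycle

section Reachability

lemma Relation.ReflTransGen.exists_rel_mem_notMem {α : Type*} {r : α → α → Prop} {S : Set α}
    {x y : α} (h : Relation.ReflTransGen r x y) (hx : x ∈ S) (hy : y ∉ S) :
    ∃ a ∈ S, ∃ b ∉ S, r a b := by
  induction h using Relation.ReflTransGen.head_induction_on with
  | refl => exact absurd hx hy
  | @head a b hab _ ih => by_cases hb : b ∈ S; exacts [ih hb, ⟨a, hx, b, hb, hab⟩]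

variable {V : Type*} (A : Finset (V × V))

def DReach (i j : V) : Prop := Relation.ReflTransGen (fun x y => (x, y) ∈ A) i j

variable {A}

lemma hasDPath_zero (i : V) : HasDPath A i i 0 := ⟨fun _ => i, rfl, rfl, fun k => k.elim0⟩

lemma HasDPath.cons {i j k : V} {n : ℕ} (hij : (i, j) ∈ A) (hp : HasDPath A j k n) :
    HasDPath A i k (n + 1) := by
  obtain ⟨f, hf0, hfl, hfA⟩ := hp
  refine ⟨Fin.cons i f, rfl, by simpa [← Fin.succ_last] using hfl, fun m => ?_⟩
  cases m using Fin.cases with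
  | zero => simpa [hf0] using hij
  | succ m => simpa [← Fin.succ_castSucc] using hfA m

lemma DReach.exists_hasDPath {i j : V} (h : DReach A i j) : ∃ n, HasDPath A i j n := by
  induction h using Relation.ReflTransGen.head_induction_on with
  | refl => exact ⟨0, hasDPath_zero j⟩
  | head hij _ ih => obtain ⟨n, hp⟩ := ih; exact ⟨n + 1, hp.cons hij⟩

open Fin.NatCast in
lemma PreCycle.dReach_of_isDirected (C : PreCycle V) (hA : ∀ j, C.arrow j ∈ A)
    (hC : C.IsDirected) (a b : Fin C.l) : DReach A (C.v a) (C.v b) := by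
  have step : ∀ k : ℕ, DReach A (C.v a) (C.v (a + (k : Fin C.l))) := by
    intro k
    induction k with
    | zero => rw [Nat.cast_zero, add_zero]; exact .refl
    | succ k ih =>
      refine ih.tail ?_
      simpa [C.arrow_of_isDirected hC, C.nxt_eq_add_one, add_assoc] using hA (a + (k : Fin C.l))
  simpa using step (b - a).val

variable [DecidableEq V]

lemma fst_ne_snd_of_mem (h : EveryArrowInDirCycle A) {e : V × V} (he : e ∈ A) : e.1 ≠ e.2 := by
  obtain ⟨C, -, hdir, j, rfl⟩ := h e he
  rw [C.arrow_of_isDirected hdir]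
  exact fun hv => C.nxt_ne j (C.inj hv.symm)

lemma dReach_swap_of_mem (h : EveryArrowInDirCycle A) {i j : V} (hij : (i, j) ∈ A) :
    DReach A j i := by
  obtain ⟨C, hC, hdir, j₀, hj₀⟩ := h _ hij
  rw [C.arrow_of_isDirected hdir, Prod.mk.injEq] at hj₀
  rw [← hj₀.1, ← hj₀.2]
  exact C.dReach_of_isDirected hC.1 hdir _ _

lemma dReach_of_gConnected (hconn : GConnected A) (h : EveryArrowInDirCycle A) (i j : V) :
    DReach A i j := by
  obtain ⟨p⟩ := hconn.preconnected i j
  induction p with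
  | nil => exact .refl
  | cons hadj _ ih =>
    rcases (SimpleGraph.fromRel_adj _ _ _).1 hadj |>.2 with hA | hA
    · exact .head hA ih
    · exact (dReach_swap_of_mem h hA).trans ih

end Reachability

/-- The witness is the shortest-path potential `w i = min (μ a + n)`, over the directed paths
from `i` to a vertex `v a`, of length `n`. -/
theorem exists_potential_extending {V ι : Type*} {A : Finset (V × V)} (v : ι → V) (μ : ι → ℤ)
    (hμ : ∀ a, 0 ≤ μ a) (hreach : ∀ i, ∃ a n, HasDPath A i (v a) n)
    (hineq : ∀ a b : ι, ∀ n : ℕ, HasDPath A (v a) (v b) n → μ a - μ b ≤ (n : ℤ)) :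
    ∃ w : V → ℤ, (∀ e ∈ A, w e.1 - w e.2 ≤ 1) ∧ ∀ a, w (v a) = μ a := by
  have hleast (i : V) : ∃ m : ℤ, (∃ a n, HasDPath A i (v a) n ∧ m = μ a + n) ∧
      ∀ z, (∃ a n, HasDPath A i (v a) n ∧ z = μ a + n) → m ≤ z := by
    refine Int.exists_least_of_bdd ⟨0, ?_⟩ ?_
    · rintro _ ⟨a, n, -, rfl⟩; have := hμ a; omega
    · obtain ⟨a, n, hp⟩ := hreach i; exact ⟨_, a, n, hp, rfl⟩
  choose w hw_spec hw_le using hleast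
  refine ⟨w, ?_, fun a => ?_⟩
  · rintro ⟨i, j⟩ hij
    show w i - w j ≤ 1
    obtain ⟨a, n, hp, hj⟩ := hw_spec j
    have := hw_le i _ ⟨a, n + 1, hp.cons hij, rfl⟩
    push_cast at this
    omega
  · obtain ⟨b, n, hp, ha⟩ := hw_spec (v a)
    have h₁ := hw_le (v a) _ ⟨a, 0, hasDPath_zero _, rfl⟩
    have h₂ := hineq a b n hp
    push_cast at h₁
    omega

section Potential

variable {V : Type*} (A : Finset (V × V))

def IsFeasible (w : V → ℝ) : Prop := ∀ e ∈ A, w e.1 - w e.2 ≤ 1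

open scoped Classical in
noncomputable def tightArrows (w : V → ℝ) : Finset (V × V) :=
  A.filter fun e => w e.1 - w e.2 = 1

variable {A}

lemma mem_tightArrows {w : V → ℝ} {e : V × V} :
    e ∈ tightArrows A w ↔ e ∈ A ∧ w e.1 - w e.2 = 1 := by
  simp [tightArrows]

lemma tightArrows_subset (w : V → ℝ) : tightArrows A w ⊆ A := fun _ he => (mem_tightArrows.1 he).1

/-- If the tight arrows do not connect `V`, lift `w` on a tight component `S` by the largest
amount keeping it feasible; an arrow leaving `S` becomes tight. -/
lemma IsFeasible.exists_tightArrows_ssubset [DecidableEq V] [Nonempty V]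
    (hA : ∀ i j, DReach A i j) {w : V → ℝ} (hw : IsFeasible A w)
    (hnc : ¬ GConnected (tightArrows A w)) :
    ∃ w', IsFeasible A w' ∧ tightArrows A w ⊂ tightArrows A w' := by
  classical
  set G := SimpleGraph.fromRel fun i j => (i, j) ∈ tightArrows A w
  obtain ⟨i₁, j₁, hnr⟩ : ∃ i j, ¬ G.Reachable i j := by
    by_contra! h; exact hnc ⟨h⟩
  set S : Set V := {k | G.Reachable i₁ k}
  have hS {e : V × V} (he : e ∈ tightArrows A w) : e.1 ∈ S ↔ e.2 ∈ S := by
    by_cases he' : e.1 = e.2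
    · rw [he']
    have hadj : G.Adj e.1 e.2 := (SimpleGraph.fromRel_adj _ _ _).2 ⟨he', .inl he⟩
    exact ⟨fun h => h.trans hadj.reachable, fun h => h.trans hadj.symm.reachable⟩
  obtain ⟨a, ha, b, hb, hab⟩ :=
    (hA i₁ j₁).exists_rel_mem_notMem (S := S) SimpleGraph.Reachable.rfl hnr
  set B := A.filter fun e => e.1 ∈ S ∧ e.2 ∉ S
  have hB : ∀ e ∈ B, e ∈ A ∧ e.1 ∈ S ∧ e.2 ∉ S := fun e he => by simpa [B] using he
  have hB_lt : ∀ e ∈ B, w e.1 - w e.2 < 1 := fun e he => by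
    obtain ⟨heA, h₁, h₂⟩ := hB e he
    exact (hw e heA).lt_of_ne fun ht => h₂ ((hS (mem_tightArrows.2 ⟨heA, ht⟩)).1 h₁)
  obtain ⟨e₀, he₀, hmax⟩ := B.exists_max_image (fun e => w e.1 - w e.2)
    ⟨(a, b), by simpa [B] using ⟨hab, ha, hb⟩⟩
  set t := 1 - (w e₀.1 - w e₀.2)
  have ht : 0 < t := by have := hB_lt e₀ he₀; simp only [t]; linarith
  set w' : V → ℝ := fun k => if k ∈ S then w k + t else w k
  have hw' : IsFeasible A w' := fun e he => by
    have := hw e he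
    by_cases h₁ : e.1 ∈ S <;> by_cases h₂ : e.2 ∈ S <;> simp only [w', h₁, h₂, if_true, if_false]
    · linarith
    · have := hmax e (by simpa [B] using ⟨he, h₁, h₂⟩); simp only [t]; linarith
    · linarith
    · linarith
  have hsub : tightArrows A w ⊆ tightArrows A w' := fun e he => by
    obtain ⟨heA, ht⟩ := mem_tightArrows.1 he
    refine mem_tightArrows.2 ⟨heA, ?_⟩
    by_cases h₁ : e.1 ∈ S
    · simp only [w', h₁, (hS he).1 h₁, if_true]; linarith
    · simp only [w', h₁, mt (hS he).2 h₁, if_false]; exact ht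
  obtain ⟨he₀A, h₁, h₂⟩ := hB e₀ he₀
  refine ⟨w', hw', (Finset.ssubset_iff_of_subset hsub).2 ⟨e₀, ?_, ?_⟩⟩
  · refine mem_tightArrows.2 ⟨he₀A, ?_⟩
    simp only [w', h₁, h₂, if_true, if_false, t]; ring
  · exact fun h => (hB_lt e₀ he₀).ne (mem_tightArrows.1 h).2

theorem IsFeasible.exists_gConnected_tightArrows [DecidableEq V] [Nonempty V]
    (hA : ∀ i j, DReach A i j) {w₀ : V → ℝ} (hw₀ : IsFeasible A w₀) :
    ∃ w, IsFeasible A w ∧ tightArrows A w₀ ⊆ tightArrows A w ∧ GConnected (tightArrows A w) := by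
  obtain ⟨w, ⟨hw, hsub⟩, hmin⟩ := (measure fun w => A.card - (tightArrows A w).card).wf.has_min
    {w | IsFeasible A w ∧ tightArrows A w₀ ⊆ tightArrows A w} ⟨w₀, hw₀, subset_rfl⟩
  refine ⟨w, hw, hsub, by_contra fun hnc => ?_⟩
  obtain ⟨w', hw', hss⟩ := hw.exists_tightArrows_ssubset hA hnc
  refine hmin w' ⟨hw', hsub.trans hss.subset⟩ ?_
  have h₁ := Finset.card_lt_card hss
  have h₂ := Finset.card_le_card (tightArrows_subset (A := A) w')
  show A.card - (tightArrows A w').card < A.card - (tightArrows A w).card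
  omega

end Potential

section Polytope

variable {V : Type*} [DecidableEq V] {A : Finset (V × V)}

lemma rho_mem_polyG {e : V × V} (he : e ∈ A) : rho e ∈ polyG A :=
  subset_convexHull ℝ _ ⟨e, he, rfl⟩

lemma polyG_subset_of_rho_mem {K : Set (V → ℝ)} (hK : Convex ℝ K) (h : ∀ e ∈ A, rho e ∈ K) :
    polyG A ⊆ K :=
  convexHull_min (by rintro _ ⟨e, he, rfl⟩; exact h e he) hK

lemma zero_mem_polyG (h : EveryArrowInDirCycle A) {e : V × V} (he : e ∈ A) : 0 ∈ polyG A := by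
  obtain ⟨C, hC, hdir, -⟩ := h e he
  have hsum : ∑ j, (C.l : ℝ)⁻¹ • rho (C.arrow j) = 0 := by
    simp only [← Finset.smul_sum, C.arrow_of_isDirected hdir, C.sum_rho_around, smul_zero]
  rw [← hsum]
  refine (convex_convexHull ℝ _).sum_mem (fun _ _ => by positivity) ?_
    fun j _ => rho_mem_polyG (hC.1 j)
  simp [C.pos.ne']

end Polytope

section Functional

variable {V : Type*} [Fintype V]

noncomputable def potFun (w : V → ℝ) : StrongDual ℝ (V → ℝ) :=
  ∑ i, w i • ContinuousLinearMap.proj (R := ℝ) (φ := fun _ : V => ℝ) i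

lemma potFun_apply (w x : V → ℝ) : potFun w x = ∑ i, w i * x i := by
  simp [potFun]

variable [DecidableEq V]

lemma potFun_rho (w : V → ℝ) (e : V × V) : potFun w (rho e) = w e.1 - w e.2 := by
  simp [potFun_apply, rho, mul_sub, Finset.sum_sub_distrib]

lemma ker_potFun_one_le {U : Submodule ℝ (V → ℝ)} (hU : ∀ i j, rho (i, j) ∈ U) (i₀ : V) :
    LinearMap.ker (potFun (1 : V → ℝ) : (V → ℝ) →ₗ[ℝ] ℝ) ≤ U := by
  intro x hx
  rw [LinearMap.mem_ker, ContinuousLinearMap.coe_coe, potFun_apply] at hx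
  simp only [Pi.one_apply, one_mul] at hx
  have : x = ∑ i, x i • rho (i, i₀) := by
    funext k
    simp [Finset.sum_apply, rho, mul_sub, Finset.sum_sub_distrib, hx]
  rw [this]
  exact U.sum_mem fun i _ => U.smul_mem _ (hU i i₀)

variable {A : Finset (V × V)}

lemma potFun_one_eq_zero_of_mem_polyG {x : V → ℝ} (hx : x ∈ polyG A) : potFun 1 x = 0 :=
  polyG_subset_of_rho_mem (K := LinearMap.ker (potFun (1 : V → ℝ) : (V → ℝ) →ₗ[ℝ] ℝ))
    (Submodule.convex _) (fun e _ => by simp [potFun_rho]) hx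

lemma IsFeasible.potFun_le {w : V → ℝ} (hw : IsFeasible A w) {x : V → ℝ} (hx : x ∈ polyG A) :
    potFun w x ≤ 1 :=
  polyG_subset_of_rho_mem (convex_halfSpace_le (potFun w).toLinearMap.isLinear 1)
    (fun e he => by simpa [potFun_rho] using hw e he) hx

lemma rho_mem_extremePoints_polyG (h : EveryArrowInDirCycle A) {e : V × V} (he : e ∈ A) :
    rho e ∈ (polyG A).extremePoints ℝ := by
  refine exposedPoints_subset_extremePoints
    (mem_exposedPoints_convexHull_of_lt ⟨e, he, rfl⟩ (potFun (rho e)) ?_)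
  rintro _ ⟨e', -, rfl⟩ hne
  have hee := fst_ne_snd_of_mem h he
  rw [potFun_rho, potFun_rho, rho_apply_eq_one.2 ⟨rfl, hee⟩,
    rho_apply_eq_neg_one.2 ⟨rfl, hee.symm⟩]
  have h₁ := rho_apply_le_one e e'.1
  have h₂ := neg_one_le_rho_apply e e'.2
  refine lt_of_le_of_ne (by linarith) fun h₃ => hne ?_
  rw [Prod.ext (rho_apply_eq_one.1 (by linarith : rho e e'.1 = 1)).1
    (rho_apply_eq_neg_one.1 (by linarith : rho e e'.2 = -1)).1]

lemma rho_mem_toExposed {w : V → ℝ} (hw : IsFeasible A w) {e : V × V}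
    (he : e ∈ tightArrows A w) : rho e ∈ (potFun w).toExposed (polyG A) := by
  obtain ⟨heA, htight⟩ := mem_tightArrows.1 he
  refine ⟨rho_mem_polyG heA, fun y hy => ?_⟩
  rw [potFun_rho, htight]
  exact hw.potFun_le hy

/-- The direction of the face together with `ρ(e₀)` spans the hyperplane `Σ x_i = 0`, which
contains `P_G`. -/
theorem isFacetOf_toExposed (h : EveryArrowInDirCycle A) {w : V → ℝ} (hw : IsFeasible A w)
    (hc : GConnected (tightArrows A w)) {e₀ : V × V} (he₀ : e₀ ∈ tightArrows A w) :
    IsFacetOf ((potFun w).toExposed (polyG A)) (polyG A) := by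
  set F := (potFun w).toExposed (polyG A)
  obtain ⟨he₀A, he₀w⟩ := mem_tightArrows.1 he₀
  have hF_one : ∀ x ∈ F, potFun w x = 1 := fun x hx =>
    (hw.potFun_le hx.1).antisymm (by simpa [potFun_rho, he₀w] using hx.2 _ (rho_mem_polyG he₀A))
  have hnot : rho e₀ ∉ vectorSpan ℝ F := fun hmem => by
    have := vectorSpan_le_ker_of_forall_eq (potFun w : (V → ℝ) →ₗ[ℝ] ℝ) hF_one hmem
    rw [LinearMap.mem_ker, ContinuousLinearMap.coe_coe, potFun_rho, he₀w] at this
    exact one_ne_zero this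
  set U := vectorSpan ℝ F ⊔ Submodule.span ℝ {rho e₀}
  have hU : ∀ i j, rho (i, j) ∈ U := rho_mem_of_gConnected hc fun e he => by
    rw [← sub_add_cancel (rho e) (rho e₀), ← vsub_eq_sub]
    exact U.add_mem (Submodule.mem_sup_left (vsub_mem_vectorSpan ℝ (rho_mem_toExposed hw he)
      (rho_mem_toExposed hw he₀))) (Submodule.mem_sup_right (Submodule.mem_span_singleton_self _))
  have hspan : vectorSpan ℝ (polyG A) = U := by
    refine le_antisymm ?_ (sup_le (vectorSpan_mono ℝ fun x hx => hx.1) ?_)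
    · exact (vectorSpan_le_ker_of_forall_eq (potFun (1 : V → ℝ) : (V → ℝ) →ₗ[ℝ] ℝ)
        fun x hx => potFun_one_eq_zero_of_mem_polyG hx).trans (ker_potFun_one_le hU e₀.1)
    · rw [Submodule.span_singleton_le_iff_mem]
      simpa using vsub_mem_vectorSpan ℝ (rho_mem_polyG he₀A) (zero_mem_polyG h he₀A)
  exact ⟨ContinuousLinearMap.toExposed.isExposed, ⟨rho e₀, rho_mem_toExposed hw he₀⟩,
    by rw [pdim, pdim, hspan, Submodule.finrank_sup_span_singleton hnot]⟩

theorem not_simplicial_of_isFacetOf (h : EveryArrowInDirCycle A) {F : Set (V → ℝ)}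
    (hF : IsFacetOf F (polyG A)) {ι : Type*} {f : ι → V × V} (hfA : ∀ j, f j ∈ A)
    (hf : Function.Injective f) (hmem : ∀ j, rho (f j) ∈ F)
    (hdep : ¬ AffineIndependent ℝ (fun j => rho (f j))) : ¬ Simplicial (polyG A) := by
  intro hsimp
  have hext : ∀ j, rho (f j) ∈ F.extremePoints ℝ := fun j =>
    inter_extremePoints_subset_extremePoints_of_subset hF.1.subset
      ⟨hmem j, rho_mem_extremePoints_polyG h (hfA j)⟩
  let g : ι ↪ F.extremePoints ℝ := ⟨fun j => ⟨rho (f j), hext j⟩, fun a b hab =>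
    hf (rho_injective_of_ne (fst_ne_snd_of_mem h (hfA a)) (congrArg Subtype.val hab))⟩
  exact hdep ((hsimp F hF).comp_embedding g)

end Functional

/-- if `G` has a homogeneous cycle `C` with
`μ_C(i_a) - μ_C(i_b) ≤ dist_G(i_a, i_b)` for all `a, b` (equivalently,
`μ_C(i_a) - μ_C(i_b) ≤ n` for every directed path of length `n` from `i_a` to `i_b`),
then the `l` points `ρ(e_1), …, ρ(e_l)` of `C` are affinely dependent, they lie on a
common proper face of `P_G`, and `P_G` is not simplicial. -/
theorem stmt7 {d : ℕ} (A : Finset (Fin d × Fin d)) (hconn : GConnected A)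
    (h : EveryArrowInDirCycle A) (C : PreCycle (Fin d)) (hC : C.IsCycleIn A)
    (hhom : C.Homogeneous) (μ : Fin C.l → ℤ) (hμ : C.IsMu μ)
    (hineq : ∀ a b : Fin C.l, ∀ n : ℕ, HasDPath A (C.v a) (C.v b) n → μ a - μ b ≤ (n : ℤ)) :
    (¬ AffineIndependent ℝ (fun j : Fin C.l => rho (C.arrow j))) ∧
    (∃ F : Set (Fin d → ℝ), IsExposed ℝ (polyG A) F ∧ F.Nonempty ∧ F ≠ polyG A ∧
      ∀ j, rho (C.arrow j) ∈ F) ∧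
    ¬ Simplicial (polyG A) := by
  have hreach := dReach_of_gConnected hconn h
  obtain ⟨w₀, hw₀A, hw₀μ⟩ := exists_potential_extending C.v μ hμ.1
    (fun i => ⟨_, (hreach i (C.v ⟨0, C.pos⟩)).exists_hasDPath⟩) hineq
  have hfeas : IsFeasible A (fun i => (w₀ i : ℝ)) := fun e he => by
    dsimp only; exact_mod_cast hw₀A e he
  have htight : ∀ j, C.arrow j ∈ tightArrows A (fun i => (w₀ i : ℝ)) := fun j =>
    mem_tightArrows.2 ⟨hC.1 j, by exact_mod_cast hμ.sub_arrow hw₀μ j⟩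
  have : Nonempty (Fin d) := ⟨C.v ⟨0, C.pos⟩⟩
  obtain ⟨w, hw, hsub, hwconn⟩ := hfeas.exists_gConnected_tightArrows hreach
  have hF := isFacetOf_toExposed h hw hwconn (hsub (htight ⟨0, C.pos⟩))
  have hmem j : rho (C.arrow j) ∈ (potFun w).toExposed (polyG A) :=
    rho_mem_toExposed hw (hsub (htight j))
  have hdep := C.not_affineIndependent_rho_arrow hhom
  exact ⟨hdep, ⟨_, hF.1, hF.2.1, hF.ne, hmem⟩,
    not_simplicial_of_isFacetOf h hF hC.1 hC.2 hmem hdep⟩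
end

section
/- If P_G is not simplicial, then G possesses a homogeneous cycle C with vertex set {i_1,...,i_l} satisfying μ_C(i_a) - μ_C(i_b) ≤ dist_G(i_a, i_b) for all 1 ≤ a, b ≤ l. -/
open Finset

/-!
Expose the facet `F` by a linear functional `l`. On the generators it reads
`l (e_i - e_j) = a i - a j` for the potential `a i = l e_i`, which is at most the facet value `m`
on every arrow, with equality exactly on the arrows spanning `F`. Since every arrow lies in a
directed cycle, `m > 0`, for otherwise `F` would be all of `P_G`.

An affine dependence among the vertices of `F` is a linear dependence among the vectors
`e_i - e_j` of facet arrows. No vertex is a leaf of the support of such a dependence (its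
coordinate would see a single nonzero term), so the support contains an undirected cycle `C`.
Along `C` the potential drops by `m` on forward arrows and rises by `m` on backward ones. Hence
`(a - min_C a) / m` is `μ_C` on `C`, `C` is homogeneous, and `a i - a j ≤ m * dist_G(i, j)` is
the claimed inequality.
-/

lemma succAt_injective {l : ℕ} (hl : 0 < l) : Function.Injective (succAt hl) := by
  intro j k hjk
  have h : (j + 1 : ℕ) ≡ k + 1 [MOD l] := congrArg Fin.val hjk
  exact Fin.ext ((Nat.ModEq.add_right_cancel' 1 h).eq_of_lt_of_lt j.2 k.2)

lemma exists_int_sub_eq_mul_of_succAt {l : ℕ} (hl : 0 < l) (g : Fin l → ℝ) (m : ℝ)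
    (hg : ∀ j, ∃ z : ℤ, g (succAt hl j) - g j = z * m) :
    ∃ ν : Fin l → ℤ, ∀ j k, g j - g k = (ν j - ν k) * m := by
  suffices h : ∀ k (hk : k < l), ∃ z : ℤ, g ⟨k, hk⟩ - g ⟨0, hl⟩ = z * m by
    choose ν hν using fun j : Fin l => h j j.2
    exact ⟨ν, fun j k => by linarith [hν j, hν k]⟩
  intro k hk
  induction k with
  | zero => exact ⟨0, by simp⟩
  | succ k ih =>
    obtain ⟨z, hz⟩ := ih (by omega)
    obtain ⟨w, hw⟩ := hg ⟨k, by omega⟩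
    have hsucc : succAt hl ⟨k, by omega⟩ = ⟨k + 1, hk⟩ := Fin.ext (Nat.mod_eq_of_lt hk)
    rw [hsucc] at hw
    exact ⟨z + w, by push_cast; linarith⟩

namespace PreCycle

variable {V : Type*} (C : PreCycle V)

lemma sum_comp_nxt {M : Type*} [AddCommMonoid M] (g : Fin C.l → M) :
    ∑ j, g (C.nxt j) = ∑ j, g j :=
  C.nxt_bijective.sum_comp g

lemma nxt_nxt_ne (h3 : 3 ≤ C.l) (j : Fin C.l) : C.nxt (C.nxt j) ≠ j := by
  intro h
  have hmod : (j + 2 : ℕ) % C.l = j % C.l := by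
    have := congrArg Fin.val h
    simp only [nxt, succAt, Nat.mod_add_mod] at this
    rw [Nat.mod_eq_of_lt j.2]
    exact this
  have hdvd : C.l ∣ j + 2 - j := (Nat.modEq_iff_dvd' (by omega)).mp hmod.symm
  have := Nat.le_of_dvd (by omega) hdvd
  omega

lemma arrow_injective (h3 : 3 ≤ C.l) : Function.Injective C.arrow := by
  intro j k hjk
  have hcases : (C.v j = C.v k ∧ C.v (C.nxt j) = C.v (C.nxt k)) ∨
      (C.v j = C.v (C.nxt k) ∧ C.v (C.nxt j) = C.v k) := by
    unfold arrow at hjk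
    rcases Bool.eq_false_or_eq_true (C.ε j) with hj | hj <;>
      rcases Bool.eq_false_or_eq_true (C.ε k) with hk | hk <;>
      simp only [hj, hk, if_true, Bool.false_eq_true, if_false, Prod.mk.injEq] at hjk <;> tauto
  rcases hcases with ⟨h, -⟩ | ⟨h, h'⟩
  · exact C.inj h
  · refine absurd ?_ (C.nxt_nxt_ne h3 k)
    rw [← C.inj h, C.inj h']

lemma homogeneous_of_step {μ : Fin C.l → ℤ}
    (hμ : ∀ j, μ (C.nxt j) = if C.ε j then μ j - 1 else μ j + 1) : C.Homogeneous := by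
  have hsum : ∑ j, (μ (C.nxt j) - μ j) = 0 := by
    rw [Finset.sum_sub_distrib, C.sum_comp_nxt μ, sub_self]
  have hstep : ∀ j, μ (C.nxt j) - μ j = if C.ε j then -1 else 1 := fun j => by
    rw [hμ j]; split <;> ring
  simp only [hstep, Finset.sum_ite, Finset.sum_const, smul_neg, nsmul_eq_mul, mul_one] at hsum
  have hcard := Finset.card_filter_add_card_filter_not (s := univ) (p := fun j => C.ε j = true)
  rw [card_univ, Fintype.card_fin] at hcard
  unfold Homogeneous
  omega

lemma exists_isMu_of_potential (a : V → ℝ) {m : ℝ} (hm : 0 < m)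
    (ha : ∀ j, a (C.arrow j).1 - a (C.arrow j).2 = m) :
    ∃ μ : Fin C.l → ℤ, C.IsMu μ ∧ ∀ j k, a (C.v j) - a (C.v k) = (μ j - μ k) * m := by
  have hstep : ∀ j, a (C.v (C.nxt j)) - a (C.v j) = (if C.ε j then -1 else 1 : ℤ) * m := by
    intro j
    have := ha j
    unfold arrow at this
    split at this <;> simp only [*] <;> push_cast <;> linarith
  obtain ⟨ν, hν⟩ := exists_int_sub_eq_mul_of_succAt C.pos (a ∘ C.v) m fun j => ⟨_, hstep j⟩
  have : Nonempty (Fin C.l) := ⟨⟨0, C.pos⟩⟩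
  obtain ⟨j₀, hj₀⟩ := Finite.exists_min ν
  refine ⟨fun j => ν j - ν j₀, ⟨fun j => by linarith [hj₀ j], fun j => ?_, ⟨j₀, sub_self _⟩⟩,
    fun j k => by simpa using hν j k⟩
  have hcast : ((ν (C.nxt j) - ν j : ℤ) : ℝ) = (if C.ε j then -1 else 1 : ℤ) := by
    apply mul_right_cancel₀ hm.ne'
    rw [← hstep j]
    push_cast
    exact (hν _ _).symm
  have := Int.cast_injective hcast
  show ν (C.nxt j) - ν j₀ = if C.ε j then ν j - ν j₀ - 1 else ν j - ν j₀ + 1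
  split_ifs at this ⊢ <;> omega

end PreCycle

lemma HasDPath.sub_le {V : Type*} {A : Finset (V × V)} (a : V → ℝ) {m : ℝ}
    (ha : ∀ e ∈ A, a e.1 - a e.2 ≤ m) {i j : V} {n : ℕ} (h : HasDPath A i j n) :
    a i - a j ≤ n * m := by
  induction n generalizing j with
  | zero =>
    obtain ⟨f, h0, hlast, -⟩ := h
    rw [← h0, ← hlast]
    simp
  | succ n ih =>
    obtain ⟨f, h0, hlast, hf⟩ := h
    have hprev := ih ⟨fun k => f k.castSucc, h0, rfl, fun k => hf k.castSucc⟩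
    have hlast_arrow := ha _ (hf (Fin.last n))
    dsimp only at hprev hlast_arrow
    rw [Fin.succ_last] at hlast_arrow
    rw [← hlast]
    push_cast
    linarith

namespace SimpleGraph

variable {V : Type*} (G : SimpleGraph V)

lemma exists_nonbacktracking_walk (hdeg : ∀ x y, G.Adj x y → ∃ z ≠ y, G.Adj x z)
    {x₀ y₀ : V} (h₀ : G.Adj x₀ y₀) :
    ∃ f : ℕ → V, ∀ n, G.Adj (f n) (f (n + 1)) ∧ f (n + 2) ≠ f n := by
  have hstep : ∀ p : {p : V × V // G.Adj p.1 p.2},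
      ∃ q : {p : V × V // G.Adj p.1 p.2}, q.1.1 = p.1.2 ∧ q.1.2 ≠ p.1.1 := by
    rintro ⟨⟨x, y⟩, hxy⟩
    obtain ⟨z, hzx, hyz⟩ := hdeg y x hxy.symm
    exact ⟨⟨(y, z), hyz⟩, rfl, hzx⟩
  choose next hnext using hstep
  let p : ℕ → {p : V × V // G.Adj p.1 p.2} := fun n => next^[n] ⟨(x₀, y₀), h₀⟩
  have hp : ∀ n, p (n + 1) = next (p n) := fun n => Function.iterate_succ_apply' _ _ _
  refine ⟨fun n => (p n).1.1, fun n => ⟨?_, ?_⟩⟩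
  · simpa only [hp, (hnext _).1] using (p n).2
  · simp only [hp, (hnext _).1]
    exact (hnext _).2

/-- The first repetition of the walk closes the cycle. -/
lemma exists_cycle_of_nonbacktracking_walk [Finite V] (f : ℕ → V)
    (hf : ∀ n, G.Adj (f n) (f (n + 1)) ∧ f (n + 2) ≠ f n) :
    ∃ (L : ℕ) (hL : 0 < L) (c : Fin L → V),
      3 ≤ L ∧ Function.Injective c ∧ ∀ j, G.Adj (c j) (c (succAt hL j)) := by
  classical
  have hrep : ∃ N, ∃ n < N, f n = f N := by
    obtain ⟨x, y, hxy, hfxy⟩ := Finite.exists_ne_map_eq_of_infinite f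
    rcases hxy.lt_or_gt with h | h
    exacts [⟨y, x, h, hfxy⟩, ⟨x, y, h, hfxy.symm⟩]
  obtain ⟨n, hnN, hfn⟩ := Nat.find_spec hrep
  set N := Nat.find hrep
  have hmin : ∀ i j, i < j → j < N → f i ≠ f j := fun i j hij hjN hfij =>
    Nat.find_min hrep hjN ⟨i, hij, hfij⟩
  have hN1 : N ≠ n + 1 := fun h => (hf n).1.ne (by rw [hfn, h])
  have hN2 : N ≠ n + 2 := fun h => (hf n).2 (by rw [← h, hfn])
  refine ⟨N - n, by omega, fun j => f (n + j), by omega, fun j k hjk => ?_, fun j => ?_⟩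
  · by_contra hne
    rcases Nat.lt_or_gt_of_ne (Fin.val_ne_of_ne hne) with h | h
    · exact hmin _ _ (by omega) (by omega) hjk
    · exact hmin _ _ (by omega) (by omega) hjk.symm
  · show G.Adj (f (n + j)) (f (n + (j + 1) % (N - n)))
    rcases Nat.lt_or_ge (j + 1) (N - n) with h | h
    · rw [Nat.mod_eq_of_lt h, ← add_assoc]
      exact (hf _).1
    · rw [show j + 1 = N - n by omega, Nat.mod_self, add_zero, hfn]
      convert (hf (n + j)).1 using 2
      omega

end SimpleGraph

def underlyingGraph {V : Type*} (T : Set (V × V)) : SimpleGraph V :=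
  SimpleGraph.fromRel fun x y => (x, y) ∈ T

lemma exists_preCycle_of_no_leaf {V : Type*} [Finite V] {T : Set (V × V)}
    (hdeg : ∀ x y, (underlyingGraph T).Adj x y → ∃ z ≠ y, (underlyingGraph T).Adj x z)
    {e : V × V} (he : e ∈ T) (hloop : e.1 ≠ e.2) :
    ∃ C : PreCycle V, 3 ≤ C.l ∧ ∀ j, C.arrow j ∈ T := by
  classical
  set G := underlyingGraph T
  obtain ⟨f, hf⟩ := G.exists_nonbacktracking_walk hdeg (x₀ := e.1) (y₀ := e.2) ⟨hloop, .inl he⟩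
  obtain ⟨L, hL, c, h3, hc, hadj⟩ := G.exists_cycle_of_nonbacktracking_walk f hf
  refine ⟨⟨L, by omega, c, fun j => decide ((c j, c (succAt hL j)) ∈ T), hc⟩, h3, fun j => ?_⟩
  by_cases h : (c j, c (succAt hL j)) ∈ T
  · simp [PreCycle.arrow, PreCycle.nxt, h]
  · simpa [PreCycle.arrow, PreCycle.nxt, h] using (hadj j).2

section Polytope

variable {V : Type*} [DecidableEq V]

lemma rho_eq_single (e : V × V) : rho e = Pi.single e.1 1 - Pi.single e.2 1 := by
  funext k
  simp [rho, Pi.single_apply]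

lemma rho_apply_ne_zero_iff {e : V × V} (he : e.1 ≠ e.2) {x : V} :
    rho e x ≠ 0 ↔ x = e.1 ∨ x = e.2 := by
  unfold rho
  by_cases h1 : x = e.1 <;> by_cases h2 : x = e.2 <;> simp_all

lemma exists_ne_rho_apply_ne_zero {s : Finset (V × V)} {g : V × V → ℝ}
    (hs : ∑ e ∈ s, g e • rho e = 0) {e₁ : V × V} (he₁ : e₁ ∈ s) (hg : g e₁ ≠ 0) {x : V}
    (hx : rho e₁ x ≠ 0) : ∃ e ∈ s, e ≠ e₁ ∧ g e ≠ 0 ∧ rho e x ≠ 0 := by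
  by_contra! h
  have hx0 := congrFun hs x
  simp only [Finset.sum_apply, Pi.smul_apply, smul_eq_mul, Pi.zero_apply] at hx0
  rw [Finset.sum_eq_single_of_mem e₁ he₁ fun e he hne => ?_] at hx0
  · exact mul_ne_zero hg hx hx0
  · by_cases hge : g e = 0
    · rw [hge, zero_mul]
    · rw [h e he hne hge, mul_zero]

lemma exists_preCycle_of_not_linearIndepOn [Finite V] {T : Set (V × V)}
    (hloop : ∀ e ∈ T, e.1 ≠ e.2) (hanti : ∀ e ∈ T, e.swap ∉ T) (hdep : ¬ LinearIndepOn ℝ rho T) :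
    ∃ C : PreCycle V, 3 ≤ C.l ∧ ∀ j, C.arrow j ∈ T := by
  obtain ⟨g, hgT, hsum, hg0⟩ := linearDepOn_iff.mp hdep
  obtain ⟨e₀, he₀⟩ := Finsupp.ne_iff.mp hg0
  have hsupp : ∀ {e}, e ∈ g.support → e ∈ T := fun he => hgT he
  suffices hdeg : ∀ x y, (underlyingGraph (g.support : Set (V × V))).Adj x y →
      ∃ z ≠ y, (underlyingGraph (g.support : Set (V × V))).Adj x z by
    have he₀s : e₀ ∈ g.support := Finsupp.mem_support_iff.mpr he₀
    obtain ⟨C, h3, hC⟩ := exists_preCycle_of_no_leaf hdeg he₀s (hloop _ (hsupp he₀s))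
    exact ⟨C, h3, fun j => hsupp (hC j)⟩
  intro x y hxy
  obtain ⟨e₁, he₁, hxe₁, hye₁⟩ : ∃ e₁ ∈ g.support, (x = e₁.1 ∨ x = e₁.2) ∧
      (e₁ = (x, y) ∨ e₁ = (y, x)) := by
    rcases hxy.2 with h | h
    exacts [⟨_, h, .inl rfl, .inl rfl⟩, ⟨_, h, .inr rfl, .inr rfl⟩]
  obtain ⟨e, he, hne, -, hex⟩ := exists_ne_rho_apply_ne_zero hsum he₁
    (Finsupp.mem_support_iff.mp he₁) ((rho_apply_ne_zero_iff (hloop _ (hsupp he₁))).mpr hxe₁)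
  -- `e` is another arrow of the support at `x`; it does not join `x` to `y`, since `T` has no
  -- antiparallel pair.
  have hnot : e ≠ (x, y) ∧ e ≠ (y, x) := by
    constructor <;> rintro rfl <;> rcases hye₁ with rfl | rfl
    all_goals first | exact hne rfl | exact hanti _ (hsupp he) (hsupp he₁)
  rcases (rho_apply_ne_zero_iff (hloop _ (hsupp he))).mp hex with rfl | rfl
  · exact ⟨e.2, fun h => hnot.1 (by rw [← h]), hloop _ (hsupp he), .inl he⟩
  · exact ⟨e.1, fun h => hnot.2 (by rw [← h]), (hloop _ (hsupp he)).symm, .inr he⟩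

lemma EveryArrowInDirCycle.sub_eq_of_nonpos {A : Finset (V × V)} (hA : EveryArrowInDirCycle A)
    (a : V → ℝ) {m : ℝ} (hle : ∀ e ∈ A, a e.1 - a e.2 ≤ m) (hm : m ≤ 0) {e : V × V}
    (he : e ∈ A) : a e.1 - a e.2 = m := by
  obtain ⟨C, hC, hdir, j₀, rfl⟩ := hA e he
  have hsum : ∑ j, (a (C.arrow j).1 - a (C.arrow j).2) = 0 := by
    have harrow : ∀ j, C.arrow j = (C.v j, C.v (C.nxt j)) := fun j => if_pos (hdir j)
    simp only [harrow]
    rw [Finset.sum_sub_distrib, C.sum_comp_nxt fun j => a (C.v j), sub_self]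
  have hterm : ∀ j ∈ univ, a (C.arrow j).1 - a (C.arrow j).2 ≤ 0 :=
    fun j _ => (hle _ (hC.1 j)).trans hm
  have := (Finset.sum_eq_zero_iff_of_nonpos hterm).mp hsum j₀ (mem_univ _)
  linarith [hle _ (hC.1 j₀)]

/-- The potential `a i = l e_i` of a functional `l` exposing the facet `F`, with facet value `m`. -/
lemma IsFacetOf.exists_potential {A : Finset (V × V)} (hA : EveryArrowInDirCycle A)
    {F : Set (V → ℝ)} (hF : IsFacetOf F (polyG A)) :
    ∃ (a : V → ℝ) (m : ℝ), 0 < m ∧ (∀ e ∈ A, a e.1 - a e.2 ≤ m) ∧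
      F.extremePoints ℝ ⊆ rho '' {e | e ∈ A ∧ a e.1 - a e.2 = m} := by
  obtain ⟨hexp, hne, hdim⟩ := hF
  obtain ⟨l, rfl⟩ := hexp hne
  obtain ⟨x₀, hx₀P, hx₀max⟩ := hne
  set a : V → ℝ := fun k => l (Pi.single k 1)
  have hl : ∀ e, l (rho e) = a e.1 - a e.2 := fun e => by rw [rho_eq_single, map_sub]
  have hrho : ∀ e ∈ A, rho e ∈ polyG A := fun e he => subset_convexHull ℝ _ ⟨e, he, rfl⟩
  have hle : ∀ e ∈ A, a e.1 - a e.2 ≤ l x₀ := fun e he => hl e ▸ hx₀max _ (hrho e he)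
  refine ⟨a, l x₀, ?_, hle, fun x hx => ?_⟩
  · by_contra! hm
    have hPF : polyG A ⊆ {x ∈ polyG A | ∀ y ∈ polyG A, l y ≤ l x} := by
      refine convexHull_min ?_ (hexp.convex (convex_convexHull ℝ _))
      rintro _ ⟨e, he, rfl⟩
      refine ⟨hrho e he, fun y hy => (hx₀max y hy).trans ?_⟩
      rw [hl, hA.sub_eq_of_nonpos a hle hm he]
    rw [(Set.sep_subset _ _).antisymm hPF] at hdim
    omega
  · obtain ⟨e, he, rfl⟩ :=
      extremePoints_convexHull_subset (hexp.isExtreme.extremePoints_subset_extremePoints hx)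
    exact ⟨e, ⟨he, (hle e he).antisymm (hl e ▸ (extremePoints_subset hx).2 x₀ hx₀P)⟩, rfl⟩

end Polytope

theorem stmt8_general {d : ℕ} (A : Finset (Fin d × Fin d))
    (h : EveryArrowInDirCycle A) (hns : ¬ Simplicial (polyG A)) :
    ∃ C : PreCycle (Fin d), C.IsCycleIn A ∧ C.Homogeneous ∧
      ∃ μ : Fin C.l → ℤ, C.IsMu μ ∧
        ∀ a b : Fin C.l, ∀ n : ℕ, HasDPath A (C.v a) (C.v b) n → μ a - μ b ≤ (n : ℤ) := by
  obtain ⟨F, hF, hdep⟩ : ∃ F, IsFacetOf F (polyG A) ∧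
      ¬ AffineIndependent ℝ (fun x : F.extremePoints ℝ => (x : Fin d → ℝ)) := by
    simpa [Simplicial] using hns
  obtain ⟨a, m, hm, hle, hext⟩ := hF.exists_potential h
  have hT : ¬ LinearIndepOn ℝ rho {e | e ∈ A ∧ a e.1 - a e.2 = m} := fun hT =>
    hdep (hT.id_image.mono hext).affineIndependent
  obtain ⟨C, h3, hCT⟩ := exists_preCycle_of_not_linearIndepOn
    (fun e he hloop => by linarith [he.2, congrArg a hloop])
    (fun e he hswap => by linarith [he.2, show a e.2 - a e.1 = m from hswap.2]) hT
  obtain ⟨μ, hμ, hμa⟩ := C.exists_isMu_of_potential a hm fun j => (hCT j).2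
  refine ⟨C, ⟨fun j => (hCT j).1, C.arrow_injective h3⟩, C.homogeneous_of_step hμ.2.1, μ, hμ,
    fun i j n hpath => ?_⟩
  have hbound := hpath.sub_le a hle
  rw [hμa] at hbound
  exact_mod_cast le_of_mul_le_mul_right hbound hm

/-- if `P_G` is not simplicial, then `G` has a homogeneous cycle `C` with
`μ_C(i_a) - μ_C(i_b) ≤ dist_G(i_a, i_b)` for all `a, b` (equivalently,
`μ_C(i_a) - μ_C(i_b) ≤ n` for every directed path of length `n` from `i_a` to `i_b`). -/
theorem stmt8 {d : ℕ} (A : Finset (Fin d × Fin d)) (hconn : GConnected A)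
    (h : EveryArrowInDirCycle A) (hns : ¬ Simplicial (polyG A)) :
    ∃ C : PreCycle (Fin d), C.IsCycleIn A ∧ C.Homogeneous ∧
      ∃ μ : Fin C.l → ℤ, C.IsMu μ ∧
        ∀ a b : Fin C.l, ∀ n : ℕ, HasDPath A (C.v a) (C.v b) n → μ a - μ b ≤ (n : ℤ) :=
  stmt8_general A h hns
end
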